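/- arXiv:math/0507244 — 9 statements merged into one kernel-verified Lean document; each statement's English description precedes it below -/
import Mathlib

section
/- A covariant connection ∇ on TM respects the Poisson bivector Π (i.e., ∇_{∂_k} π^{ij} = 0 for all i,j,k) if and only if the contravariant connection induced by the transposed connection ᵗ∇ is torsion-free; in coordinates, with †Γ_k^{ij} = π^{is} Γ^j_{ks}, the torsion coefficients are −†Γ_k^{ij} + †Γ_k^{ji} − ∂π^{ij}/∂x^k = −(∂π^{ij}/∂x^k + Γ^i_{ks} π^{sj} + Γ^j_{ks} π^{is}). -/
/-- Partial derivative of a function on `ℝⁿ` in the `k`-th coordinate direction. -/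
noncomputable def pd {n : ℕ} (k : Fin n) (f : (Fin n → ℝ) → ℝ) (x : Fin n → ℝ) : ℝ :=
  fderiv ℝ f x (Pi.single k 1)

/-- A covariant connection with Christoffel symbols `Γ^k_{ij} = G i j k` respects the
Poisson bivector (`∇_{∂_k} π^{ij} = 0`) iff the contravariant connection induced by the
transposed connection, with symbols `†Γ_k^{ij} = π^{is} Γ^j_{ks}`, is torsion-free;
moreover its torsion coefficients equal `−∇_{∂_k} π^{ij}`. -/
theorem covariant_respects_iff_transposed_induced_torsion_free
    (n : ℕ) (π : Fin n → Fin n → (Fin n → ℝ) → ℝ)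
    (G : Fin n → Fin n → Fin n → (Fin n → ℝ) → ℝ)
    (hπ : ∀ i j, ContDiff ℝ (⊤ : ℕ∞) (π i j))
    (hG : ∀ i j k, ContDiff ℝ (⊤ : ℕ∞) (G i j k))
    (hanti : ∀ i j (x : Fin n → ℝ), π i j x = -π j i x)
    -- `†Γ_k^{ij} = π^{is} Γ^j_{ks}` :
    (dΓ : Fin n → Fin n → Fin n → (Fin n → ℝ) → ℝ)
    (hdΓ : ∀ i j k (x : Fin n → ℝ), dΓ i j k x = ∑ s, π i s x * G k s j x) :
    (∀ i j k (x : Fin n → ℝ),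
        -dΓ i j k x + dΓ j i k x - pd k (π i j) x
          = -(pd k (π i j) x + ∑ s, G k s i x * π s j x + ∑ s, G k s j x * π i s x))
    ∧ ((∀ i j k (x : Fin n → ℝ),
          pd k (π i j) x + ∑ s, G k s i x * π s j x + ∑ s, G k s j x * π i s x = 0)
        ↔ (∀ i j k (x : Fin n → ℝ),
          -dΓ i j k x + dΓ j i k x - pd k (π i j) x = 0)) := by
  have key : ∀ i j k (x : Fin n → ℝ),
      -dΓ i j k x + dΓ j i k x - pd k (π i j) x
        = -(pd k (π i j) x + ∑ s, G k s i x * π s j x + ∑ s, G k s j x * π i s x) := by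
    intro i j k x
    rw [hdΓ, hdΓ]
    have h1 : ∑ s, π j s x * G k s i x = ∑ s, -(G k s i x * π s j x) := by
      refine Finset.sum_congr rfl fun s _ => ?_
      rw [hanti j s]; ring
    have h2 : ∑ s, π i s x * G k s j x = ∑ s, G k s j x * π i s x := by
      refine Finset.sum_congr rfl fun s _ => ?_
      ring
    rw [h1, h2, Finset.sum_neg_distrib]
    ring
  refine ⟨key, ?_, ?_⟩
  · intro h i j k x
    rw [key, h]; ring
  · intro h i j k x
    have := h i j k x
    rw [key] at this
    linarith
end

section
/- If contravariant connections (∇, †∇) with Christoffel symbols Γ_k^{ij}, †Γ_k^{ij} satisfy the associated condition π^{ik} Γ_k^{jl} = π^{jk} †Γ_k^{il}, then the contravariant derivative of the Poisson tensor satisfies ∇^{dx^m} π^{ij} = −π^{mk}(−†Γ_k^{ij} + †Γ_k^{ji} − ∂π^{ij}/∂x^k). In particular, if †∇ is torsion-free then ∇ respects Π. -/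
/-- If contravariant connections `(∇, †∇)` with Christoffel symbols `Γ_k^{ij} = Γ i j k`
and `†Γ_k^{ij} = dΓ i j k` satisfy the associated condition
`π^{ik} Γ_k^{jl} = π^{jk} †Γ_k^{il}`, then
`∇^{dx^m} π^{ij} = −π^{mk}(−†Γ_k^{ij} + †Γ_k^{ji} − ∂π^{ij}/∂x^k)`.
In particular, if `†∇` is torsion-free then `∇` respects `Π`. -/
theorem associated_contravariant_derivative_of_poisson_tensor
    (n : ℕ) (π : Fin n → Fin n → (Fin n → ℝ) → ℝ)
    (Γ dΓ : Fin n → Fin n → Fin n → (Fin n → ℝ) → ℝ)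
    (hanti : ∀ i j (x : Fin n → ℝ), π i j x = -π j i x)
    (hassoc : ∀ i j l (x : Fin n → ℝ),
      ∑ k, π i k x * Γ j l k x = ∑ k, π j k x * dΓ i l k x) :
    (∀ m i j (x : Fin n → ℝ),
        ∑ k, π m k x * pd k (π i j) x + ∑ k, Γ m i k x * π k j x
            + ∑ k, Γ m j k x * π i k x
          = -∑ k, π m k x * (-dΓ i j k x + dΓ j i k x - pd k (π i j) x))
    ∧ ((∀ i j k (x : Fin n → ℝ), -dΓ i j k x + dΓ j i k x - pd k (π i j) x = 0) →
        (∀ m i j (x : Fin n → ℝ),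
          ∑ k, π m k x * pd k (π i j) x + ∑ k, Γ m i k x * π k j x
            + ∑ k, Γ m j k x * π i k x = 0)) := by
  have main : ∀ m i j (x : Fin n → ℝ),
      ∑ k, π m k x * pd k (π i j) x + ∑ k, Γ m i k x * π k j x
          + ∑ k, Γ m j k x * π i k x
        = -∑ k, π m k x * (-dΓ i j k x + dΓ j i k x - pd k (π i j) x) := by
    intro m i j x
    have h2 : ∑ k, Γ m i k x * π k j x = -∑ k, π m k x * dΓ j i k x := by
      have hc : ∀ k ∈ Finset.univ, Γ m i k x * π k j x = -(π j k x * Γ m i k x) := by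
        intro k _; rw [hanti k j]; ring
      rw [Finset.sum_congr rfl hc, Finset.sum_neg_distrib, hassoc j m i x]
    have h3 : ∑ k, Γ m j k x * π i k x = ∑ k, π m k x * dΓ i j k x := by
      have hc : ∀ k ∈ Finset.univ, Γ m j k x * π i k x = π i k x * Γ m j k x := by
        intro k _; ring
      rw [Finset.sum_congr rfl hc, hassoc i m j x]
    rw [h2, h3]
    simp only [mul_sub, mul_add, mul_neg, Finset.sum_add_distrib, Finset.sum_sub_distrib,
      Finset.sum_neg_distrib]
    ring
  refine ⟨main, fun htf m i j x => ?_⟩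
  rw [main m i j x]
  simp [htf]
end

section
/- A torsion-free contravariant connection ∇ on T*M respects the Poisson bivector Π if and only if it satisfies ∇^α(#β) − ∇^β(#α) − #[α,β] = 0 for all 1-forms α, β; in coordinates, if −Γ_k^{ij} + Γ_k^{ji} − ∂π^{ij}/∂x^k = 0 holds, then ∇^{dx^m}π^{ij} = 0 for all indices if and only if π^{ik} Γ_k^{jl} = π^{jk} Γ_k^{il} for all indices. -/
/-- A torsion-free contravariant connection (symbols `Γ_k^{ij} = Γ i j k`,
`−Γ_k^{ij} + Γ_k^{ji} − ∂π^{ij}/∂x^k = 0`) respects the Poisson bivector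
(`∇^{dx^m} π^{ij} = 0`) if and only if `π^{ik} Γ_k^{jl} = π^{jk} Γ_k^{il}`. -/
theorem torsion_free_respects_iff_self_associated
    (n : ℕ) (π : Fin n → Fin n → (Fin n → ℝ) → ℝ)
    (Γ : Fin n → Fin n → Fin n → (Fin n → ℝ) → ℝ)
    (hπ : ∀ i j, ContDiff ℝ (⊤ : ℕ∞) (π i j))
    (hanti : ∀ i j (x : Fin n → ℝ), π i j x = -π j i x)
    (hJac : ∀ i j l (x : Fin n → ℝ),
      ∑ s, (π i s x * pd s (π j l) x + π j s x * pd s (π l i) x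
            + π l s x * pd s (π i j) x) = 0)
    (htf : ∀ i j k (x : Fin n → ℝ), -Γ i j k x + Γ j i k x - pd k (π i j) x = 0) :
    (∀ m i j (x : Fin n → ℝ),
        ∑ k, π m k x * pd k (π i j) x + ∑ k, Γ m i k x * π k j x
          + ∑ k, Γ m j k x * π i k x = 0)
    ↔ (∀ i j l (x : Fin n → ℝ),
        ∑ k, π i k x * Γ j l k x = ∑ k, π j k x * Γ i l k x) := by
  -- Key algebraic identity: rewrite the covariant derivative expression in
  -- terms of `T a b c = ∑ k, π a k x * Γ b c k x`.
  have key : ∀ (x : Fin n → ℝ) (m i j : Fin n),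
      ∑ k, π m k x * pd k (π i j) x + ∑ k, Γ m i k x * π k j x
        + ∑ k, Γ m j k x * π i k x
      = (∑ k, π m k x * Γ j i k x) - (∑ k, π m k x * Γ i j k x)
        - (∑ k, π j k x * Γ m i k x) + (∑ k, π i k x * Γ m j k x) := by
    intro x m i j
    have h1 : ∑ k, π m k x * pd k (π i j) x
        = ∑ k, π m k x * Γ j i k x - ∑ k, π m k x * Γ i j k x := by
      rw [← Finset.sum_sub_distrib]
      refine Finset.sum_congr rfl fun k _ => ?_
      have hpd : pd k (π i j) x = Γ j i k x - Γ i j k x := by linarith [htf i j k x]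
      rw [hpd]; ring
    have h2 : ∑ k, Γ m i k x * π k j x = -∑ k, π j k x * Γ m i k x := by
      rw [← Finset.sum_neg_distrib]
      refine Finset.sum_congr rfl fun k _ => ?_
      rw [hanti k j x]; ring
    have h3 : ∑ k, Γ m j k x * π i k x = ∑ k, π i k x * Γ m j k x := by
      refine Finset.sum_congr rfl fun k _ => ?_
      ring
    rw [h1, h2, h3]; ring
  constructor
  · intro hR i j l x
    -- From `hR` and `key` we get the antisymmetrized relations.
    have hA : ∀ a b c : Fin n,
        (∑ k, π a k x * Γ c b k x) - (∑ k, π a k x * Γ b c k x)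
          - (∑ k, π c k x * Γ a b k x) + (∑ k, π b k x * Γ a c k x) = 0 := by
      intro a b c
      have := hR a b c x
      rw [key x a b c] at this
      linarith
    have e1 := hA i j l
    have e2 := hA l i j
    have e3 := hA j l i
    linarith
  · intro hS m i j x
    rw [key x m i j]
    have h1 := hS j m i x
    have h2 := hS i m j x
    linarith
end

section
/- Suppose contravariant connections (∇, †∇) with symbols Γ_k^{ij}, †Γ_k^{ij} satisfy π^{ik} Γ_k^{jl} = π^{jk} †Γ_k^{il} and †∇ is torsion-free (−†Γ_k^{ij} + †Γ_k^{ji} − ∂π^{ij}/∂x^k = 0). Then the averaged connection with Christoffel symbols Γ̂_k^{ij} = (1/3)(Γ_k^{ij} + Γ_k^{ji} + ∂π^{ji}/∂x^k + †Γ_k^{ij}) is torsion-free and satisfies π^{ik} Γ̂_k^{jl} = π^{jk} Γ̂_k^{il} (hence is a torsion-free Poisson contravariant connection). -/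
/-!
Write `ᵗΓ_k^{ij} = Γ_k^{ji} + ∂_k π^{ji}` for the transposed connection, so that
`Γ̂ = (Γ + ᵗΓ + †Γ) / 3`. Torsion and the defect `π^{ik} G_k^{jl} - π^{jk} G_k^{il}` of
the Poisson condition are affine, resp. linear, in the symbols `G`. Transposition negates torsion,
so the torsion of `Γ̂` is a third of that of `†Γ`, which vanishes. Association says exactly
that the defects of `Γ` and `†Γ` cancel, and the defect of `ᵗΓ` is, after association and
torsion-freeness of `†Γ`, minus the Jacobiator of `π`.
-/

lemma pd_neg {n : ℕ} (k : Fin n) (f : (Fin n → ℝ) → ℝ) (x : Fin n → ℝ) :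
    pd k (fun y => -f y) x = -pd k f x := by
  simp only [pd, fderiv_fun_neg, neg_apply]

/-- `G i j k x` is the Christoffel symbol `G_k^{ij}` at `x`. -/
abbrev ConnectionSymbols (n : ℕ) : Type := Fin n → Fin n → Fin n → (Fin n → ℝ) → ℝ

section ContravariantConnection

variable {n : ℕ} (π : Fin n → Fin n → (Fin n → ℝ) → ℝ)

lemma pd_of_antisymm (hanti : ∀ i j x, π i j x = -π j i x) (i j k : Fin n) (x : Fin n → ℝ) :
    pd k (π i j) x = -pd k (π j i) x := by
  rw [show π i j = fun y => -π j i y from funext (hanti i j), pd_neg]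

noncomputable def torsion (G : ConnectionSymbols n) (i j k : Fin n) (x : Fin n → ℝ) : ℝ :=
  -G i j k x + G j i k x - pd k (π i j) x

noncomputable def transpose (G : ConnectionSymbols n) : ConnectionSymbols n :=
  fun i j k x => G j i k x + pd k (π j i) x

def poissonDefect (G : ConnectionSymbols n) (i j l : Fin n) (x : Fin n → ℝ) : ℝ :=
  ∑ k, π i k x * G j l k x - ∑ k, π j k x * G i l k x

variable {π}

lemma torsion_transpose (hanti : ∀ i j x, π i j x = -π j i x) (G : ConnectionSymbols n)
    (i j k : Fin n) (x : Fin n → ℝ) :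
    torsion π (transpose π G) i j k x = -torsion π G i j k x := by
  simp only [torsion, transpose, pd_of_antisymm π hanti j i]
  ring

lemma torsion_average (A B C : ConnectionSymbols n) (i j k : Fin n) (x : Fin n → ℝ) :
    torsion π (fun i j k x => (1 / 3) * (A i j k x + B i j k x + C i j k x)) i j k x
      = (1 / 3) * (torsion π A i j k x + torsion π B i j k x + torsion π C i j k x) := by
  simp only [torsion]
  ring

lemma poissonDefect_average (A B C : ConnectionSymbols n) (i j l : Fin n) (x : Fin n → ℝ) :
    poissonDefect π (fun i j k x => (1 / 3) * (A i j k x + B i j k x + C i j k x)) i j l x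
      = (1 / 3) * (poissonDefect π A i j l x + poissonDefect π B i j l x
          + poissonDefect π C i j l x) := by
  simp only [poissonDefect, mul_left_comm _ (1 / 3 : ℝ), ← Finset.mul_sum, mul_add,
    Finset.sum_add_distrib]
  ring

lemma poissonDefect_add_eq_zero_of_associated (Γ dΓ : ConnectionSymbols n)
    (hassoc : ∀ i j l x, ∑ k, π i k x * Γ j l k x = ∑ k, π j k x * dΓ i l k x)
    (i j l : Fin n) (x : Fin n → ℝ) :
    poissonDefect π Γ i j l x + poissonDefect π dΓ i j l x = 0 := by
  simp only [poissonDefect, hassoc i j l x, hassoc j i l x]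
  ring

lemma poissonDefect_transpose_eq_zero (hanti : ∀ i j x, π i j x = -π j i x)
    (hJac : ∀ i j l x,
      ∑ s, (π i s x * pd s (π j l) x + π j s x * pd s (π l i) x
            + π l s x * pd s (π i j) x) = 0)
    (Γ dΓ : ConnectionSymbols n)
    (hassoc : ∀ i j l x, ∑ k, π i k x * Γ j l k x = ∑ k, π j k x * dΓ i l k x)
    (htf : ∀ i j k x, torsion π dΓ i j k x = 0) (i j l : Fin n) (x : Fin n → ℝ) :
    poissonDefect π (transpose π Γ) i j l x = 0 := by
  have hdΓ : ∑ k, π l k x * dΓ i j k x - ∑ k, π l k x * dΓ j i k x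
      = -∑ k, π l k x * pd k (π i j) x := by
    rw [← Finset.sum_sub_distrib, ← Finset.sum_neg_distrib]
    refine Finset.sum_congr rfl fun k _ => ?_
    simp only [torsion] at htf
    linear_combination (-π l k x) * htf i j k x
  have hpd : ∑ k, π i k x * pd k (π l j) x = -∑ k, π i k x * pd k (π j l) x := by
    rw [← Finset.sum_neg_distrib]
    refine Finset.sum_congr rfl fun k _ => ?_
    rw [pd_of_antisymm π hanti l j, mul_neg]
  have hJ := hJac i j l x
  simp only [Finset.sum_add_distrib] at hJ
  simp only [poissonDefect, transpose, mul_add, Finset.sum_add_distrib,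
    hassoc i l j x, hassoc j l i x]
  linarith

end ContravariantConnection

theorem averaged_connection_torsion_free_poisson_general
    (n : ℕ) (π : Fin n → Fin n → (Fin n → ℝ) → ℝ)
    (Γ dΓ : Fin n → Fin n → Fin n → (Fin n → ℝ) → ℝ)
    (hanti : ∀ i j (x : Fin n → ℝ), π i j x = -π j i x)
    (hJac : ∀ i j l (x : Fin n → ℝ),
      ∑ s, (π i s x * pd s (π j l) x + π j s x * pd s (π l i) x
            + π l s x * pd s (π i j) x) = 0)
    (hassoc : ∀ i j l (x : Fin n → ℝ),
      ∑ k, π i k x * Γ j l k x = ∑ k, π j k x * dΓ i l k x)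
    (htf : ∀ i j k (x : Fin n → ℝ), -dΓ i j k x + dΓ j i k x - pd k (π i j) x = 0)
    (hΓ : Fin n → Fin n → Fin n → (Fin n → ℝ) → ℝ)
    (hhΓ : ∀ i j k (x : Fin n → ℝ),
      hΓ i j k x = (1/3) * (Γ i j k x + Γ j i k x + pd k (π j i) x + dΓ i j k x)) :
    (∀ i j k (x : Fin n → ℝ), -hΓ i j k x + hΓ j i k x - pd k (π i j) x = 0)
    ∧ (∀ i j l (x : Fin n → ℝ),
        ∑ k, π i k x * hΓ j l k x = ∑ k, π j k x * hΓ i l k x) := by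
  have htf' : ∀ i j k x, torsion π dΓ i j k x = 0 := htf
  have hΓ_eq :
      hΓ = fun i j k x => (1 / 3) * (Γ i j k x + transpose π Γ i j k x + dΓ i j k x) := by
    funext i j k x
    rw [hhΓ, transpose]
    ring
  constructor
  · intro i j k x
    change torsion π hΓ i j k x = 0
    rw [hΓ_eq, torsion_average, torsion_transpose hanti, htf']
    ring
  · intro i j l x
    rw [← sub_eq_zero]
    change poissonDefect π hΓ i j l x = 0
    rw [hΓ_eq, poissonDefect_average, add_right_comm,
      poissonDefect_add_eq_zero_of_associated Γ dΓ hassoc,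
      poissonDefect_transpose_eq_zero hanti hJac Γ dΓ hassoc htf']
    ring

/-- If `(∇, †∇)` (symbols `Γ i j k`, `dΓ i j k`) are associated and `†∇` is torsion-free,
then the averaged connection `Γ̂_k^{ij} = (1/3)(Γ_k^{ij} + Γ_k^{ji} + ∂π^{ji}/∂x^k + †Γ_k^{ij})`
is torsion-free and satisfies `π^{ik} Γ̂_k^{jl} = π^{jk} Γ̂_k^{il}`, hence is a
torsion-free Poisson contravariant connection. -/
theorem averaged_connection_torsion_free_poisson
    (n : ℕ) (π : Fin n → Fin n → (Fin n → ℝ) → ℝ)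
    (Γ dΓ : Fin n → Fin n → Fin n → (Fin n → ℝ) → ℝ)
    (hπ : ∀ i j, ContDiff ℝ (⊤ : ℕ∞) (π i j))
    (hanti : ∀ i j (x : Fin n → ℝ), π i j x = -π j i x)
    (hJac : ∀ i j l (x : Fin n → ℝ),
      ∑ s, (π i s x * pd s (π j l) x + π j s x * pd s (π l i) x
            + π l s x * pd s (π i j) x) = 0)
    (hassoc : ∀ i j l (x : Fin n → ℝ),
      ∑ k, π i k x * Γ j l k x = ∑ k, π j k x * dΓ i l k x)
    (htf : ∀ i j k (x : Fin n → ℝ), -dΓ i j k x + dΓ j i k x - pd k (π i j) x = 0)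
    (hΓ : Fin n → Fin n → Fin n → (Fin n → ℝ) → ℝ)
    (hhΓ : ∀ i j k (x : Fin n → ℝ),
      hΓ i j k x = (1/3) * (Γ i j k x + Γ j i k x + pd k (π j i) x + dΓ i j k x)) :
    (∀ i j k (x : Fin n → ℝ), -hΓ i j k x + hΓ j i k x - pd k (π i j) x = 0)
    ∧ (∀ i j l (x : Fin n → ℝ),
        ∑ k, π i k x * hΓ j l k x = ∑ k, π j k x * hΓ i l k x) :=
  averaged_connection_torsion_free_poisson_general n π Γ dΓ hanti hJac hassoc htf hΓ hhΓ
end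

section
/- On a Kähler–Poisson manifold, the contravariant connection with Christoffel symbols Γ_m^{l̄k} = −∂g^{l̄k}/∂z^m, Γ_{n̄}^{kl̄} = ∂g^{l̄k}/∂z̄^n (all symbols with other index types zero) is torsion-free and Poisson. -/
/-- Holomorphic partial derivative `∂/∂z^k` (the variables `z` and `z̄` are treated as
independent, `p = (z, z̄)`). -/
noncomputable def pdz {n : ℕ} (k : Fin n)
    (f : (Fin n → ℂ) × (Fin n → ℂ) → ℂ) (p : (Fin n → ℂ) × (Fin n → ℂ)) : ℂ :=
  fderiv ℂ f p (Pi.single k 1, 0)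

/-- Antiholomorphic partial derivative `∂/∂z̄^k`. -/
noncomputable def pdzbar {n : ℕ} (k : Fin n)
    (f : (Fin n → ℂ) × (Fin n → ℂ) → ℂ) (p : (Fin n → ℂ) × (Fin n → ℂ)) : ℂ :=
  fderiv ℂ f p (0, Pi.single k 1)

/-- Derivative along the coordinate indexed by `Fin n ⊕ Fin n` (holomorphic indices on
the left, antiholomorphic on the right). -/
noncomputable def pdI {n : ℕ} (i : Fin n ⊕ Fin n)
    (f : (Fin n → ℂ) × (Fin n → ℂ) → ℂ) (p : (Fin n → ℂ) × (Fin n → ℂ)) : ℂ :=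
  match i with
  | .inl k => pdz k f p
  | .inr l => pdzbar l f p

/-- The Poisson tensor of a Kähler–Poisson manifold: `π^{l̄k} = g^{l̄k}`,
`π^{kl̄} = −g^{l̄k}`, `π^{km} = 0`, `π^{l̄n̄} = 0`.  Here `g l k = g^{l̄k}`. -/
noncomputable def piKP {n : ℕ} (g : Fin n → Fin n → (Fin n → ℂ) × (Fin n → ℂ) → ℂ)
    (i j : Fin n ⊕ Fin n) (p : (Fin n → ℂ) × (Fin n → ℂ)) : ℂ :=
  match i, j with
  | .inl k, .inr l => -g l k p
  | .inr l, .inl k => g l k p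
  | _, _ => 0

/-- The Kähler–Poisson contravariant connection:
`Γ_m^{l̄k} = −∂g^{l̄k}/∂z^m`, `Γ_{n̄}^{kl̄} = ∂g^{l̄k}/∂z̄^n`, all other symbols zero.
`gammaKP g a b c` is the Christoffel symbol with upper indices `a, b` and lower index `c`. -/
noncomputable def gammaKP {n : ℕ} (g : Fin n → Fin n → (Fin n → ℂ) × (Fin n → ℂ) → ℂ)
    (a b c : Fin n ⊕ Fin n) (p : (Fin n → ℂ) × (Fin n → ℂ)) : ℂ :=
  match a, b, c with
  | .inr l, .inl k, .inl m => -pdz m (g l k) p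
  | .inl k, .inr l, .inr nn => pdzbar nn (g l k) p
  | _, _, _ => 0

/-- On a Kähler–Poisson manifold the Kähler–Poisson contravariant connection is
torsion-free and Poisson. -/
theorem kahler_poisson_connection_torsion_free_poisson
    (n : ℕ) (g : Fin n → Fin n → (Fin n → ℂ) × (Fin n → ℂ) → ℂ)
    (hg : ∀ l k, ContDiff ℂ (⊤ : ℕ∞) (g l k))
    (hJac1 : ∀ t l k (p : (Fin n → ℂ) × (Fin n → ℂ)),
      ∑ s, g t s p * pdz s (g l k) p = ∑ s, g l s p * pdz s (g t k) p)
    (hJac2 : ∀ s l k (p : (Fin n → ℂ) × (Fin n → ℂ)),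
      ∑ t, g t s p * pdzbar t (g l k) p = ∑ t, g t k p * pdzbar t (g l s) p) :
    (∀ (i j k : Fin n ⊕ Fin n) (p : (Fin n → ℂ) × (Fin n → ℂ)),
        -gammaKP g i j k p + gammaKP g j i k p - pdI k (piKP g i j) p = 0)
    ∧ (∀ (i j l : Fin n ⊕ Fin n) (p : (Fin n → ℂ) × (Fin n → ℂ)),
        ∑ k, piKP g i k p * gammaKP g j l k p
          = ∑ k, piKP g j k p * gammaKP g i l k p) := by
  constructor
  · intro i j k p
    rcases i with a | a <;> rcases j with b | b <;> rcases k with c | c <;>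
      simp only [gammaKP, piKP, pdI, pdz, pdzbar,
        show ∀ a b, piKP g (Sum.inl a) (Sum.inl b) = (fun _ => (0:ℂ)) from fun _ _ => rfl,
        show ∀ a b, piKP g (Sum.inr a) (Sum.inr b) = (fun _ => (0:ℂ)) from fun _ _ => rfl,
        show ∀ a b, piKP g (Sum.inl a) (Sum.inr b) = (fun p => -g b a p) from fun _ _ => rfl,
        show ∀ a b, piKP g (Sum.inr a) (Sum.inl b) = (fun p => g a b p) from fun _ _ => rfl,
        fderiv_neg, fderiv_const] <;>
      simp
  · intro i j l p
    rcases i with a | a <;> rcases j with b | b <;> rcases l with c | c <;>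
      simp [piKP, gammaKP, Fintype.sum_sum_type]
    · exact hJac2 a c b p
    · exact hJac1 a b c p
end

section
/- A nonlinear contravariant connection D written locally as D^{dx^i} = π^{is} ∂/∂x^s − A^i_s ∂/∂ξ_s is Poisson (satisfies [[D^γ, #α^], β^] = [[D^γ, α^], #β^] for all 1-forms) if and only if π^{ms} ∂π^{ij}/∂x^s − (∂A^m_s/∂ξ_i) π^{sj} − (∂A^m_s/∂ξ_j) π^{is} = 0 for all indices. -/
/-- Partial derivative in the base (`x`) direction, `p = (x, ξ)`. -/
noncomputable def pdx {n : ℕ} (k : Fin n)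
    (f : (Fin n → ℝ) × (Fin n → ℝ) → ℝ) (p : (Fin n → ℝ) × (Fin n → ℝ)) : ℝ :=
  fderiv ℝ f p (Pi.single k 1, 0)

/-- Partial derivative in the fibre (`ξ`) direction. -/
noncomputable def pdxi {n : ℕ} (k : Fin n)
    (f : (Fin n → ℝ) × (Fin n → ℝ) → ℝ) (p : (Fin n → ℝ) × (Fin n → ℝ)) : ℝ :=
  fderiv ℝ f p (0, Pi.single k 1)

/-- The nonlinear contravariant connection `D^{dx^m} = π^{ms} ∂/∂x^s − A^m_s ∂/∂ξ_s`
acting on a function on the formal neighborhood `(T*M, Z)`. -/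
noncomputable def Dop {n : ℕ} (π : Fin n → Fin n → (Fin n → ℝ) → ℝ)
    (A : Fin n → Fin n → (Fin n → ℝ) × (Fin n → ℝ) → ℝ) (m : Fin n)
    (F : (Fin n → ℝ) × (Fin n → ℝ) → ℝ) (p : (Fin n → ℝ) × (Fin n → ℝ)) : ℝ :=
  ∑ s, π m s p.1 * pdx s F p - ∑ s, A m s p * pdxi s F p

/-- The fibrewise linear function `(#dx^i)^ = π^{is} ξ_s`. -/
noncomputable def Ph {n : ℕ} (π : Fin n → Fin n → (Fin n → ℝ) → ℝ) (i : Fin n)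
    (p : (Fin n → ℝ) × (Fin n → ℝ)) : ℝ :=
  ∑ s, π i s p.1 * p.2 s

/-!
For derivations `D, δ` of a commutative algebra and elements `G, H`, both double commutators
`[[D, G], δ]` and `[[D, δ], H]` are multiplication operators, by `-δ (D G)` and `⁅D, δ⁆ H`.
On the algebra of smooth functions on `T*ℝⁿ`, `D^{dx^m}` and the fibre derivatives `∂/∂ξ_k` are
derivations (derivatives along smooth vector fields), so the Poisson condition for `D` says exactly
`-∂_{ξ_j} D^{dx^m}(π^{is} ξ_s) = [D^{dx^m}, ∂_{ξ_i}](π^{js} ξ_s)`. Computing both sides in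
coordinates, using `∂_{ξ_i}(π^{js} ξ_s) = π^{ji}`, turns this into the stated tensor identity once
`π^{js} = -π^{sj}` is used.
-/

open scoped ContDiff

namespace Derivation

variable {R A : Type*} [CommRing R] [CommRing A] [Algebra R A] (D δ : Derivation R A A)

theorem commutator_mulLeft_commutator_apply (G F : A) :
    D (G * δ F) - G * D (δ F) - δ (D (G * F) - G * D F) = -(δ (D G) * F) := by
  simp only [leibniz, map_sub, map_add, smul_eq_mul]
  ring

theorem commutator_commutator_mulLeft_apply (H F : A) :
    D (δ (H * F)) - δ (D (H * F)) - H * (D (δ F) - δ (D F)) = ⁅D, δ⁆ H * F := by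
  simp only [commutator_apply, leibniz, map_add, smul_eq_mul]
  ring

end Derivation

section SmoothFunctions

variable {E : Type*} [NormedAddCommGroup E] [NormedSpace ℝ E]

variable (E) in
def smoothFunctions : Subalgebra ℝ (E → ℝ) where
  carrier := {f | ContDiff ℝ ∞ f}
  mul_mem' {_ _} (hf : ContDiff ℝ ∞ _) (hg : ContDiff ℝ ∞ _) := hf.mul hg
  add_mem' {_ _} (hf : ContDiff ℝ ∞ _) (hg : ContDiff ℝ ∞ _) := hf.add hg
  algebraMap_mem' c := (contDiff_const (c := c) : ContDiff ℝ ∞ _)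

theorem mem_smoothFunctions {f : E → ℝ} : f ∈ smoothFunctions E ↔ ContDiff ℝ ∞ f := by rfl

theorem differentiable_smoothFunctions (f : smoothFunctions E) : Differentiable ℝ (f : E → ℝ) :=
  (mem_smoothFunctions.1 f.2).differentiable (by simp)

noncomputable def derivationAlong (X : E → E) (hX : ContDiff ℝ ∞ X) :
    Derivation ℝ (smoothFunctions E) (smoothFunctions E) :=
  .mk' { toFun f := ⟨fun p => fderiv ℝ f p (X p), mem_smoothFunctions.2 <|
           (mem_smoothFunctions.1 f.2 |>.fderiv_right le_rfl).clm_apply hX⟩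
         map_add' f g := by
           ext p
           simp [fderiv_add (differentiable_smoothFunctions f p)
             (differentiable_smoothFunctions g p)]
         map_smul' c f := by
           ext p
           simp [fderiv_const_smul (differentiable_smoothFunctions f p)] }
    fun f g => by
      ext p
      simp [fderiv_mul (differentiable_smoothFunctions f p) (differentiable_smoothFunctions g p)]

end SmoothFunctions

section Calculus

variable {E F : Type*} [NormedAddCommGroup E] [NormedSpace ℝ E] [NormedAddCommGroup F]
  [NormedSpace ℝ F]

theorem fderiv_comp_fst_apply {G : Type*} [NormedAddCommGroup G] [NormedSpace ℝ G] {g : E → G}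
    {p : E × F} (hg : DifferentiableAt ℝ g p.1) (w : E × F) :
    fderiv ℝ (fun q => g q.1) p w = fderiv ℝ g p.1 w.1 := by
  rw [show (fun q : E × F => g q.1) = g ∘ Prod.fst from rfl,
    fderiv_comp p hg differentiableAt_fst, fderiv_fst]
  rfl

theorem fderiv_snd_apply_apply {ι : Type*} [Fintype ι] (t : ι) (p w : E × (ι → ℝ)) :
    fderiv ℝ (fun q : E × (ι → ℝ) => q.2 t) p w = w.2 t := by
  rw [fderiv_apply differentiableAt_snd, fderiv_snd]
  rfl

theorem ContinuousLinearMap.apply_prod_eq_sum {n : ℕ} (L : (Fin n → ℝ) × (Fin n → ℝ) →L[ℝ] ℝ)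
    (u v : Fin n → ℝ) :
    L (u, v) = ∑ s, u s * L (Pi.single s 1, 0) + ∑ s, v s * L (0, Pi.single s 1) := by
  have hu : ((u, 0) : (Fin n → ℝ) × (Fin n → ℝ)) = ∑ s, u s • (Pi.single s 1, 0) := by
    ext i <;> simp [Prod.fst_sum, Prod.snd_sum, Pi.single_apply]
  have hv : ((0, v) : (Fin n → ℝ) × (Fin n → ℝ)) = ∑ s, v s • (0, Pi.single s 1) := by
    ext i <;> simp [Prod.fst_sum, Prod.snd_sum, Pi.single_apply]
  rw [show (u, v) = (u, 0) + (0, v) by simp, map_add, hu, hv, map_sum, map_sum]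
  simp only [map_smul, smul_eq_mul]

theorem differentiable_pd {n : ℕ} {k : Fin n} {f : (Fin n → ℝ) → ℝ} (hf : ContDiff ℝ 2 f) :
    Differentiable ℝ (pd k f) :=
  ((hf.fderiv_right (m := 1) le_rfl).clm_apply contDiff_const).differentiable one_ne_zero

end Calculus

section Coordinates

variable {n : ℕ} (π : Fin n → Fin n → (Fin n → ℝ) → ℝ)
  (A : Fin n → Fin n → (Fin n → ℝ) × (Fin n → ℝ) → ℝ) (m : Fin n)

theorem contDiff_Ph (hπ : ∀ i j, ContDiff ℝ ∞ (π i j)) (i : Fin n) : ContDiff ℝ ∞ (Ph π i) := by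
  unfold Ph
  fun_prop

theorem pdxi_Ph (hπ : ∀ i j, Differentiable ℝ (π i j)) (i k : Fin n)
    (p : (Fin n → ℝ) × (Fin n → ℝ)) : pdxi k (Ph π i) p = π i k p.1 := by
  unfold pdxi Ph
  simp (disch := (intros; fun_prop)) [fderiv_fun_sum, fderiv_fun_mul, fderiv_comp_fst_apply,
    fderiv_snd_apply_apply, Pi.single_apply]

theorem pdx_Ph (hπ : ∀ i j, Differentiable ℝ (π i j)) (i k : Fin n)
    (p : (Fin n → ℝ) × (Fin n → ℝ)) : pdx k (Ph π i) p = ∑ t, pd k (π i t) p.1 * p.2 t := by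
  unfold pdx Ph pd
  simp (disch := (intros; fun_prop)) [fderiv_fun_sum, fderiv_fun_mul, fderiv_comp_fst_apply,
    fderiv_snd_apply_apply, mul_comm]

theorem Dop_comp_fst {g : (Fin n → ℝ) → ℝ} {p : (Fin n → ℝ) × (Fin n → ℝ)}
    (hg : DifferentiableAt ℝ g p.1) :
    Dop π A m (fun q => g q.1) p = ∑ s, π m s p.1 * pd s g p.1 := by
  simp [Dop, pdx, pdxi, pd, fderiv_comp_fst_apply hg]

theorem pdxi_Dop_Ph (hπ : ∀ i j, ContDiff ℝ 2 (π i j)) (hA : ∀ s, Differentiable ℝ (A m s))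
    (i k : Fin n) (p : (Fin n → ℝ) × (Fin n → ℝ)) :
    pdxi k (Dop π A m (Ph π i)) p
      = ∑ s, π m s p.1 * pd s (π i k) p.1 - ∑ s, pdxi k (A m s) p * π i s p.1 := by
  have hπ' : ∀ i j, Differentiable ℝ (π i j) := fun i j => (hπ i j).differentiable two_ne_zero
  have hpd : ∀ s i t, Differentiable ℝ (pd s (π i t)) := fun s i t => differentiable_pd (hπ i t)
  have hD : Dop π A m (Ph π i) = fun q =>
      ∑ s, π m s q.1 * ∑ t, pd s (π i t) q.1 * q.2 t - ∑ s, A m s q * π i s q.1 := by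
    ext q
    simp only [Dop, pdx_Ph π hπ', pdxi_Ph π hπ']
  rw [hD]
  unfold pdxi
  simp (disch := (intros; fun_prop)) [fderiv_fun_sum, fderiv_fun_mul, fderiv_fun_sub,
    fderiv_comp_fst_apply, fderiv_snd_apply_apply, Pi.single_apply, mul_comm]

theorem Dop_pdxi_Ph_sub_pdxi_Dop_Ph (hπ : ∀ i j, ContDiff ℝ 2 (π i j))
    (hA : ∀ s, Differentiable ℝ (A m s)) (i j : Fin n) (p : (Fin n → ℝ) × (Fin n → ℝ)) :
    Dop π A m (pdxi i (Ph π j)) p - pdxi i (Dop π A m (Ph π j)) p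
      = ∑ s, pdxi i (A m s) p * π j s p.1 := by
  have hπ' : ∀ i j, Differentiable ℝ (π i j) := fun i j => (hπ i j).differentiable two_ne_zero
  rw [show pdxi i (Ph π j) = fun q => π j i q.1 from funext (pdxi_Ph π hπ' j i),
    Dop_comp_fst π A m (hπ' j i p.1), pdxi_Dop_Ph π A m hπ hA]
  ring

def connectionField (p : (Fin n → ℝ) × (Fin n → ℝ)) : (Fin n → ℝ) × (Fin n → ℝ) :=
  (fun s => π m s p.1, fun s => -A m s p)

theorem Dop_eq_fderiv (F : (Fin n → ℝ) × (Fin n → ℝ) → ℝ) :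
    Dop π A m F = fun p => fderiv ℝ F p (connectionField π A m p) := by
  ext p
  rw [connectionField, ContinuousLinearMap.apply_prod_eq_sum]
  simp [Dop, pdx, pdxi, sub_eq_add_neg]

theorem contDiff_connectionField (hπ : ∀ i j, ContDiff ℝ ∞ (π i j))
    (hA : ∀ i s, ContDiff ℝ ∞ (A i s)) : ContDiff ℝ ∞ (connectionField π A m) := by
  unfold connectionField
  fun_prop

end Coordinates

section Derivations

variable {n : ℕ}

noncomputable def fibreDerivation (k : Fin n) :
    Derivation ℝ (smoothFunctions ((Fin n → ℝ) × (Fin n → ℝ)))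
      (smoothFunctions ((Fin n → ℝ) × (Fin n → ℝ))) :=
  derivationAlong (fun _ => (0, Pi.single k 1)) contDiff_const

theorem coe_fibreDerivation_apply (k : Fin n) (f : smoothFunctions ((Fin n → ℝ) × (Fin n → ℝ))) :
    (fibreDerivation k f : (Fin n → ℝ) × (Fin n → ℝ) → ℝ) = pdxi k f := rfl

variable {π : Fin n → Fin n → (Fin n → ℝ) → ℝ}
  {A : Fin n → Fin n → (Fin n → ℝ) × (Fin n → ℝ) → ℝ}

noncomputable def connectionDerivation (hπ : ∀ i j, ContDiff ℝ ∞ (π i j))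
    (hA : ∀ i s, ContDiff ℝ ∞ (A i s)) (m : Fin n) :
    Derivation ℝ (smoothFunctions ((Fin n → ℝ) × (Fin n → ℝ)))
      (smoothFunctions ((Fin n → ℝ) × (Fin n → ℝ))) :=
  derivationAlong (connectionField π A m) (contDiff_connectionField π A m hπ hA)

theorem coe_connectionDerivation_apply (hπ : ∀ i j, ContDiff ℝ ∞ (π i j))
    (hA : ∀ i s, ContDiff ℝ ∞ (A i s)) (m : Fin n)
    (f : smoothFunctions ((Fin n → ℝ) × (Fin n → ℝ))) :
    (connectionDerivation hπ hA m f : (Fin n → ℝ) × (Fin n → ℝ) → ℝ) = Dop π A m f :=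
  (Dop_eq_fderiv π A m f).symm

theorem commutator_Dop_mul_commutator_pdxi (hπ : ∀ i j, ContDiff ℝ ∞ (π i j))
    (hA : ∀ i s, ContDiff ℝ ∞ (A i s)) (m j : Fin n)
    {G F : (Fin n → ℝ) × (Fin n → ℝ) → ℝ} (hG : ContDiff ℝ ∞ G) (hF : ContDiff ℝ ∞ F)
    (p : (Fin n → ℝ) × (Fin n → ℝ)) :
    (Dop π A m (fun q => G q * pdxi j F q) p - G p * Dop π A m (fun q => pdxi j F q) p)
      - pdxi j (fun q => Dop π A m (fun r => G r * F r) q - G q * Dop π A m F q) p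
      = -(pdxi j (Dop π A m G) p * F p) := by
  have h := congrFun (congrArg Subtype.val
    ((connectionDerivation hπ hA m).commutator_mulLeft_commutator_apply (fibreDerivation j)
      ⟨G, hG⟩ ⟨F, hF⟩)) p
  simp only [Subalgebra.coe_sub, Subalgebra.coe_mul, Subalgebra.coe_neg,
    coe_connectionDerivation_apply, coe_fibreDerivation_apply, Pi.sub_apply, Pi.mul_apply,
    Pi.neg_apply] at h
  exact h

theorem commutator_Dop_pdxi_commutator_mul (hπ : ∀ i j, ContDiff ℝ ∞ (π i j))
    (hA : ∀ i s, ContDiff ℝ ∞ (A i s)) (m i : Fin n)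
    {H F : (Fin n → ℝ) × (Fin n → ℝ) → ℝ} (hH : ContDiff ℝ ∞ H) (hF : ContDiff ℝ ∞ F)
    (p : (Fin n → ℝ) × (Fin n → ℝ)) :
    (Dop π A m (fun q => pdxi i (fun r => H r * F r) q) p
        - pdxi i (fun q => Dop π A m (fun r => H r * F r) q) p)
      - H p * (Dop π A m (fun q => pdxi i F q) p - pdxi i (fun q => Dop π A m F q) p)
      = (Dop π A m (pdxi i H) p - pdxi i (Dop π A m H) p) * F p := by
  have h := congrFun (congrArg Subtype.val
    ((connectionDerivation hπ hA m).commutator_commutator_mulLeft_apply (fibreDerivation i)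
      ⟨H, hH⟩ ⟨F, hF⟩)) p
  simp only [Derivation.commutator_apply, Subalgebra.coe_sub, Subalgebra.coe_mul,
    coe_connectionDerivation_apply, coe_fibreDerivation_apply, Pi.sub_apply, Pi.mul_apply] at h
  exact h

end Derivations

/-- A nonlinear contravariant connection `D` is Poisson, i.e.
`[[D^{dx^m}, (#dx^i)^], (dx^j)^] = [[D^{dx^m}, (dx^i)^], (#dx^j)^]` as operators on
smooth functions, if and only if
`π^{ms} ∂π^{ij}/∂x^s − (∂A^m_s/∂ξ_i) π^{sj} − (∂A^m_s/∂ξ_j) π^{is} = 0`. -/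
theorem nonlinear_connection_poisson_iff
    (n : ℕ) (π : Fin n → Fin n → (Fin n → ℝ) → ℝ)
    (A : Fin n → Fin n → (Fin n → ℝ) × (Fin n → ℝ) → ℝ)
    (hπ : ∀ i j, ContDiff ℝ (⊤ : ℕ∞) (π i j))
    (hanti : ∀ i j (x : Fin n → ℝ), π i j x = -π j i x)
    (hA : ∀ i s, ContDiff ℝ (⊤ : ℕ∞) (A i s)) :
    (∀ m i j (F : (Fin n → ℝ) × (Fin n → ℝ) → ℝ), ContDiff ℝ (⊤ : ℕ∞) F →
      ∀ p : (Fin n → ℝ) × (Fin n → ℝ),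
        (Dop π A m (fun q => Ph π i q * pdxi j F q) p
            - Ph π i p * Dop π A m (fun q => pdxi j F q) p)
          - pdxi j (fun q => Dop π A m (fun r => Ph π i r * F r) q
              - Ph π i q * Dop π A m F q) p
        = (Dop π A m (fun q => pdxi i (fun r => Ph π j r * F r) q) p
            - pdxi i (fun q => Dop π A m (fun r => Ph π j r * F r) q) p)
          - Ph π j p * (Dop π A m (fun q => pdxi i F q) p
              - pdxi i (fun q => Dop π A m F q) p))
    ↔ (∀ m i j (p : (Fin n → ℝ) × (Fin n → ℝ)),
        ∑ s, π m s p.1 * pd s (π i j) p.1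
          - ∑ s, pdxi i (A m s) p * π s j p.1
          - ∑ s, pdxi j (A m s) p * π i s p.1 = 0) := by
  have hπ2 : ∀ i j, ContDiff ℝ 2 (π i j) := fun i j =>
    (hπ i j).of_le (WithTop.coe_le_coe.2 le_top)
  have hA1 : ∀ i s, Differentiable ℝ (A i s) := fun i s => (hA i s).differentiable (by simp)
  have hanti_sum : ∀ m i j p,
      ∑ s, pdxi i (A m s) p * π s j p.1 = -∑ s, pdxi i (A m s) p * π j s p.1 := fun m i j p => by
      rw [← Finset.sum_neg_distrib]
      exact Finset.sum_congr rfl fun s _ => by rw [hanti s j]; ring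
  constructor
  · intro h m i j p
    have h1 := h m i j (fun _ => 1) contDiff_const p
    rw [commutator_Dop_mul_commutator_pdxi hπ hA m j (contDiff_Ph π hπ i) contDiff_const,
      commutator_Dop_pdxi_commutator_mul hπ hA m i (contDiff_Ph π hπ j) contDiff_const,
      pdxi_Dop_Ph π A m hπ2 (hA1 m), Dop_pdxi_Ph_sub_pdxi_Dop_Ph π A m hπ2 (hA1 m)] at h1
    rw [hanti_sum]
    linarith
  · intro h m i j F hF p
    rw [commutator_Dop_mul_commutator_pdxi hπ hA m j (contDiff_Ph π hπ i) hF,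
      commutator_Dop_pdxi_commutator_mul hπ hA m i (contDiff_Ph π hπ j) hF,
      pdxi_Dop_Ph π A m hπ2 (hA1 m), Dop_pdxi_Ph_sub_pdxi_Dop_Ph π A m hπ2 (hA1 m)]
    have hC := h m i j p
    rw [hanti_sum] at hC
    linear_combination (-F p) * hC
end

section
/- If nonlinear contravariant connections (D, †D), written locally with coefficient matrices A^i_s and K^i_s, are associated (π^{is} A^j_s = π^{js} K^i_s) and †D is torsion-free (∂K^i_s/∂ξ_j − ∂K^j_s/∂ξ_i − ∂π^{ij}/∂x^s = 0), then D is Poisson: π^{ms} ∂π^{ij}/∂x^s − (∂A^m_s/∂ξ_i) π^{sj} − (∂A^m_s/∂ξ_j) π^{is} = 0. -/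
/- Since `π` does not depend on `ξ`, differentiating the association identity
`π^{as} A^b_s = π^{bs} K^a_s` in `ξ_k` gives `π^{as} ∂A^b_s/∂ξ_k = π^{bs} ∂K^a_s/∂ξ_k`.
With the antisymmetry of `π` this turns the two `A`-terms of the Poisson expression into
`π^{ms} (∂K^i_s/∂ξ_j − ∂K^j_s/∂ξ_i)`, which equals `π^{ms} ∂π^{ij}/∂x^s` because `†D` is
torsion-free. -/

section FibreDerivative

variable {n : ℕ} (k : Fin n) {p : (Fin n → ℝ) × (Fin n → ℝ)}

theorem pdxi_comp_fst {g : (Fin n → ℝ) → ℝ} (hg : DifferentiableAt ℝ g p.1) :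
    pdxi k (fun q => g q.1) p = 0 := by
  have hcomp : HasFDerivAt (fun q : (Fin n → ℝ) × (Fin n → ℝ) => g q.1) _ p :=
    hg.hasFDerivAt.comp p hasFDerivAt_fst
  rw [pdxi, hcomp.fderiv]
  simp

theorem pdxi_mul_comp_fst {g : (Fin n → ℝ) → ℝ} {f : (Fin n → ℝ) × (Fin n → ℝ) → ℝ}
    (hg : DifferentiableAt ℝ g p.1) (hf : DifferentiableAt ℝ f p) :
    pdxi k (fun q => g q.1 * f q) p = g p.1 * pdxi k f p := by
  have hg' : DifferentiableAt ℝ (fun q : (Fin n → ℝ) × (Fin n → ℝ) => g q.1) p :=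
    hg.comp p differentiableAt_fst
  have h0 := pdxi_comp_fst k hg
  unfold pdxi at h0 ⊢
  simp [fderiv_fun_mul hg' hf, h0]

theorem pdxi_fun_sum {ι : Type*} (t : Finset ι) {F : ι → (Fin n → ℝ) × (Fin n → ℝ) → ℝ}
    (hF : ∀ s ∈ t, DifferentiableAt ℝ (F s) p) :
    pdxi k (fun q => ∑ s ∈ t, F s q) p = ∑ s ∈ t, pdxi k (F s) p := by
  simp [pdxi, fderiv_fun_sum hF]

theorem pdxi_sum_mul_comp_fst {ι : Type*} (t : Finset ι) {g : ι → (Fin n → ℝ) → ℝ}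
    {f : ι → (Fin n → ℝ) × (Fin n → ℝ) → ℝ}
    (hg : ∀ s ∈ t, DifferentiableAt ℝ (g s) p.1) (hf : ∀ s ∈ t, DifferentiableAt ℝ (f s) p) :
    pdxi k (fun q => ∑ s ∈ t, g s q.1 * f s q) p = ∑ s ∈ t, g s p.1 * pdxi k (f s) p := by
  rw [pdxi_fun_sum k t (F := fun s q => g s q.1 * f s q)
    fun s hs => ((hg s hs).comp p differentiableAt_fst).mul (hf s hs)]
  exact Finset.sum_congr rfl fun s hs => pdxi_mul_comp_fst k (hg s hs) (hf s hs)

end FibreDerivative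

theorem sum_mul_pdxi_eq_of_associated {n : ℕ} {π : Fin n → Fin n → (Fin n → ℝ) → ℝ}
    {A K : Fin n → Fin n → (Fin n → ℝ) × (Fin n → ℝ) → ℝ}
    (hπ : ∀ i j, Differentiable ℝ (π i j))
    (hA : ∀ i s, Differentiable ℝ (A i s)) (hK : ∀ i s, Differentiable ℝ (K i s))
    (hassoc : ∀ i j (p : (Fin n → ℝ) × (Fin n → ℝ)),
      ∑ s, π i s p.1 * A j s p = ∑ s, π j s p.1 * K i s p)
    (a b k : Fin n) (p : (Fin n → ℝ) × (Fin n → ℝ)) :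
    ∑ s, π a s p.1 * pdxi k (A b s) p = ∑ s, π b s p.1 * pdxi k (K a s) p := by
  rw [← pdxi_sum_mul_comp_fst k _ (fun s _ => (hπ a s).differentiableAt)
      (fun s _ => (hA b s).differentiableAt),
    ← pdxi_sum_mul_comp_fst k _ (fun s _ => (hπ b s).differentiableAt)
      (fun s _ => (hK a s).differentiableAt),
    funext (hassoc a b)]

theorem associated_torsion_free_implies_poisson_general
    (n : ℕ) (π : Fin n → Fin n → (Fin n → ℝ) → ℝ)
    (A K : Fin n → Fin n → (Fin n → ℝ) × (Fin n → ℝ) → ℝ)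
    (hπ : ∀ i j, ContDiff ℝ (⊤ : ℕ∞) (π i j))
    (hanti : ∀ i j (x : Fin n → ℝ), π i j x = -π j i x)
    (hA : ∀ i s, ContDiff ℝ (⊤ : ℕ∞) (A i s))
    (hK : ∀ i s, ContDiff ℝ (⊤ : ℕ∞) (K i s))
    (hassoc : ∀ i j (p : (Fin n → ℝ) × (Fin n → ℝ)),
      ∑ s, π i s p.1 * A j s p = ∑ s, π j s p.1 * K i s p)
    (htf : ∀ i j s (p : (Fin n → ℝ) × (Fin n → ℝ)),
      pdxi j (K i s) p - pdxi i (K j s) p - pd s (π i j) p.1 = 0) :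
    ∀ m i j (p : (Fin n → ℝ) × (Fin n → ℝ)),
      ∑ s, π m s p.1 * pd s (π i j) p.1
        - ∑ s, pdxi i (A m s) p * π s j p.1
        - ∑ s, pdxi j (A m s) p * π i s p.1 = 0 := by
  intro m i j p
  have hdiff := sum_mul_pdxi_eq_of_associated (fun i j => (hπ i j).differentiable (by simp))
    (fun i s => (hA i s).differentiable (by simp)) (fun i s => (hK i s).differentiable (by simp))
    hassoc
  have hAi : ∑ s, pdxi i (A m s) p * π s j p.1 = -∑ s, π m s p.1 * pdxi i (K j s) p := by
    rw [← hdiff j m i p, ← Finset.sum_neg_distrib]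
    exact Finset.sum_congr rfl fun s _ => by rw [hanti s j]; ring
  have hAj : ∑ s, pdxi j (A m s) p * π i s p.1 = ∑ s, π m s p.1 * pdxi j (K i s) p := by
    rw [← hdiff i m j p]
    exact Finset.sum_congr rfl fun s _ => mul_comm _ _
  rw [hAi, hAj, sub_neg_eq_add, ← Finset.sum_add_distrib, ← Finset.sum_sub_distrib]
  exact Finset.sum_eq_zero fun s _ => by linear_combination -π m s p.1 * htf i j s p

/-- If nonlinear contravariant connections `(D, †D)` with matrices `A`, `K` are
associated (`π^{is} A^j_s = π^{js} K^i_s`) and `†D` is torsion-free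
(`∂K^i_s/∂ξ_j − ∂K^j_s/∂ξ_i − ∂π^{ij}/∂x^s = 0`), then `D` is Poisson:
`π^{ms} ∂π^{ij}/∂x^s − (∂A^m_s/∂ξ_i) π^{sj} − (∂A^m_s/∂ξ_j) π^{is} = 0`. -/
theorem associated_torsion_free_implies_poisson
    (n : ℕ) (π : Fin n → Fin n → (Fin n → ℝ) → ℝ)
    (A K : Fin n → Fin n → (Fin n → ℝ) × (Fin n → ℝ) → ℝ)
    (hπ : ∀ i j, ContDiff ℝ (⊤ : ℕ∞) (π i j))
    (hanti : ∀ i j (x : Fin n → ℝ), π i j x = -π j i x)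
    (hJac : ∀ i j l (x : Fin n → ℝ),
      ∑ s, (π i s x * pd s (π j l) x + π j s x * pd s (π l i) x
            + π l s x * pd s (π i j) x) = 0)
    (hA : ∀ i s, ContDiff ℝ (⊤ : ℕ∞) (A i s))
    (hK : ∀ i s, ContDiff ℝ (⊤ : ℕ∞) (K i s))
    (hassoc : ∀ i j (p : (Fin n → ℝ) × (Fin n → ℝ)),
      ∑ s, π i s p.1 * A j s p = ∑ s, π j s p.1 * K i s p)
    (htf : ∀ i j s (p : (Fin n → ℝ) × (Fin n → ℝ)),
      pdxi j (K i s) p - pdxi i (K j s) p - pd s (π i j) p.1 = 0) :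
    ∀ m i j (p : (Fin n → ℝ) × (Fin n → ℝ)),
      ∑ s, π m s p.1 * pd s (π i j) p.1
        - ∑ s, pdxi i (A m s) p * π s j p.1
        - ∑ s, pdxi j (A m s) p * π i s p.1 = 0 :=
  associated_torsion_free_implies_poisson_general n π A K hπ hanti hA hK hassoc htf
end

section
/- The space H_Ω of fibrewise Hamiltonian functions is closed under the bracket {F,G}_Ω = π^{ij} a_i b_j (where ∂F/∂ξ_i = π^{ij} a_j and ∂G/∂ξ_i = π^{ij} b_j), and this bracket is well-defined (independent of the choice of Hamiltonian potentials a, b) and satisfies {F,G}_Ω = a_i ∂G/∂ξ_i = −b_i ∂F/∂ξ_i. -/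
open Finset

def pairing {ι R : Type*} [Fintype ι] [CommRing R] (π : ι → ι → R) (u v : ι → R) : R :=
  ∑ i, ∑ j, π i j * u i * v j

section Algebra

variable {ι R : Type*} [Fintype ι] [CommRing R] {π : ι → ι → R}

lemma pairing_eq_sum_mul_right {u v w : ι → R} (hw : ∀ i, w i = ∑ j, π i j * v j) :
    pairing π u v = ∑ i, u i * w i := by
  simp only [pairing, hw, mul_sum]
  exact sum_congr rfl fun i _ => sum_congr rfl fun j _ => by ring

lemma pairing_eq_neg_sum_mul_left (hπ : ∀ i j, π i j = -π j i) {u v w : ι → R}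
    (hw : ∀ j, w j = ∑ i, π j i * u i) :
    pairing π u v = -∑ j, v j * w j := by
  simp only [pairing, hw, mul_sum, ← sum_neg_distrib]
  rw [sum_comm]
  exact sum_congr rfl fun j _ => sum_congr rfl fun i _ => by rw [hπ i j]; ring

lemma pairing_congr (hπ : ∀ i j, π i j = -π j i) {u u' v v' : ι → R}
    (hu : ∀ i, ∑ j, π i j * u j = ∑ j, π i j * u' j)
    (hv : ∀ i, ∑ j, π i j * v j = ∑ j, π i j * v' j) :
    pairing π u v = pairing π u' v' := by
  calc pairing π u v = ∑ i, u i * ∑ j, π i j * v' j :=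
        pairing_eq_sum_mul_right fun i => (hv i).symm
    _ = pairing π u v' := (pairing_eq_sum_mul_right fun _ => rfl).symm
    _ = -∑ j, v' j * ∑ i, π j i * u' i := pairing_eq_neg_sum_mul_left hπ fun j => (hu j).symm
    _ = pairing π u' v' := (pairing_eq_neg_sum_mul_left hπ fun _ => rfl).symm

/-- With `Da k i = ∂_k a_i` and `Db k j = ∂_k b_j`, this is the Leibniz rule for `∂_k π(a, b)`
rewritten through the symmetry of the second derivatives of `F` and `G`. -/
lemma pairing_add_pairing_eq_sum_mul (hπ : ∀ i j, π i j = -π j i) (a b : ι → R)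
    {Da Db : ι → ι → R}
    (hDa : ∀ i k, ∑ j, π i j * Da k j = ∑ j, π k j * Da i j)
    (hDb : ∀ i k, ∑ j, π i j * Db k j = ∑ j, π k j * Db i j) (k : ι) :
    pairing π (Da k) b + pairing π a (Db k)
      = ∑ j, π k j * ∑ i, (a i * Db i j - b i * Da i j) := by
  rw [pairing_eq_neg_sum_mul_left hπ (fun j => (hDa j k).symm),
    pairing_eq_sum_mul_right (fun i => (hDb i k).symm)]
  simp only [mul_sum, ← sum_neg_distrib]
  rw [sum_comm (f := fun j i => π k j * (a i * Db i j - b i * Da i j)), ← sum_add_distrib]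
  exact sum_congr rfl fun i _ => by rw [← sum_add_distrib]; exact sum_congr rfl fun j _ => by ring

end Algebra

section FibreDerivative

variable {n : ℕ}

local notation "E" => (Fin n → ℝ) × (Fin n → ℝ)

lemma pdxi_sum {ι : Type*} (k : Fin n) (s : Finset ι) (f : ι → E → ℝ) (p : E)
    (hf : ∀ i ∈ s, DifferentiableAt ℝ (f i) p) :
    pdxi k (fun q => ∑ i ∈ s, f i q) p = ∑ i ∈ s, pdxi k (f i) p := by
  simp [pdxi, fderiv_fun_sum hf]

lemma pdxi_mul (k : Fin n) {f g : E → ℝ} {p : E} (hf : DifferentiableAt ℝ f p)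
    (hg : DifferentiableAt ℝ g p) :
    pdxi k (fun q => f q * g q) p = pdxi k f p * g p + f p * pdxi k g p := by
  simp only [pdxi, fderiv_fun_mul hf hg, add_apply, smul_apply, smul_eq_mul]
  ring

lemma pdxi_base_mul (k : Fin n) {φ : (Fin n → ℝ) → ℝ} {f : E → ℝ} {p : E}
    (hφ : DifferentiableAt ℝ φ p.1) (hf : DifferentiableAt ℝ f p) :
    pdxi k (fun q => φ q.1 * f q) p = φ p.1 * pdxi k f p := by
  have hφ_fst : HasFDerivAt (fun q : E => φ q.1)
      ((fderiv ℝ φ p.1).comp (ContinuousLinearMap.fst ℝ _ _)) p :=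
    hφ.hasFDerivAt.comp p hasFDerivAt_fst
  rw [pdxi_mul k hφ_fst.differentiableAt hf, pdxi, hφ_fst.fderiv]
  simp

lemma pdxi_pdxi_comm (k i : Fin n) {H : E → ℝ} {p : E} (hH : ContDiffAt ℝ 2 H p) :
    pdxi k (pdxi i H) p = pdxi i (pdxi k H) p := by
  have hd : DifferentiableAt ℝ (fderiv ℝ H) p :=
    (hH.fderiv_right (m := 1) (by norm_num)).differentiableAt one_ne_zero
  have happly (v : E) :
      fderiv ℝ (fun q => fderiv ℝ H q v) p = (fderiv ℝ (fderiv ℝ H) p).flip v := by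
    simpa using fderiv_clm_apply hd (differentiableAt_const v)
  have hsymm : IsSymmSndFDerivAt ℝ H p :=
    hH.isSymmSndFDerivAt (by simp [minSmoothness_of_isRCLikeNormedField])
  change fderiv ℝ (fun q => fderiv ℝ H q _) p _ = fderiv ℝ (fun q => fderiv ℝ H q _) p _
  rw [happly, happly]
  simpa using hsymm.eq _ _

variable {π : Fin n → Fin n → (Fin n → ℝ) → ℝ}

lemma pdxi_sum_base_mul (hπ : ∀ i j, Differentiable ℝ (π i j)) (i k : Fin n)
    {u : Fin n → E → ℝ} (hu : ∀ j, Differentiable ℝ (u j)) (p : E) :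
    pdxi k (fun q => ∑ j, π i j q.1 * u j q) p = ∑ j, π i j p.1 * pdxi k (u j) p := by
  rw [pdxi_sum k univ (fun j q => π i j q.1 * u j q) p
    fun j _ => ((hπ i j).comp differentiable_fst p).mul (hu j p)]
  exact sum_congr rfl fun j _ => pdxi_base_mul k (hπ i j p.1) (hu j p)

lemma pdxi_pairing (hπ : ∀ i j, Differentiable ℝ (π i j)) (k : Fin n) {a b : Fin n → E → ℝ}
    (ha : ∀ i, Differentiable ℝ (a i)) (hb : ∀ i, Differentiable ℝ (b i)) (p : E) :
    pdxi k (fun q => pairing (fun i j => π i j q.1) (a · q) (b · q)) p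
      = pairing (fun i j => π i j p.1) (fun i => pdxi k (a i) p) (b · p)
        + pairing (fun i j => π i j p.1) (a · p) (fun j => pdxi k (b j) p) := by
  have hab (i j : Fin n) : Differentiable ℝ fun q => a i q * b j q := (ha i).mul (hb j)
  simp only [pairing, mul_assoc]
  rw [pdxi_sum k univ (fun i q => ∑ j, π i j q.1 * (a i q * b j q)) p
    fun i _ => DifferentiableAt.fun_sum fun j _ =>
      ((hπ i j).comp differentiable_fst p).mul (hab i j p), ← sum_add_distrib]
  refine sum_congr rfl fun i _ => ?_
  rw [pdxi_sum k univ (fun j q => π i j q.1 * (a i q * b j q)) p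
      fun j _ => ((hπ i j).comp differentiable_fst p).mul (hab i j p),
    ← sum_add_distrib]
  refine sum_congr rfl fun j _ => ?_
  rw [pdxi_base_mul k (hπ i j p.1) (hab i j p), pdxi_mul k (ha i p) (hb j p)]
  ring

/-- Since `π` does not depend on `ξ`, the second fibre derivatives of a Hamiltonian function are
`∂_k ∂_i F = (π ∂_k a)_i`, and their symmetry becomes a symmetry of `π ∂a`. -/
lemma sum_mul_pdxi_comm (hπ : ∀ i j, Differentiable ℝ (π i j)) {F : E → ℝ} (hF : ContDiff ℝ 2 F)
    {a : Fin n → E → ℝ} (ha : ∀ i, Differentiable ℝ (a i))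
    (hFa : ∀ i p, pdxi i F p = ∑ j, π i j p.1 * a j p) (p : E) (i k : Fin n) :
    ∑ j, π i j p.1 * pdxi k (a j) p = ∑ j, π k j p.1 * pdxi i (a j) p := by
  have hsecond (i k : Fin n) : pdxi k (pdxi i F) p = ∑ j, π i j p.1 * pdxi k (a j) p := by
    rw [show pdxi i F = _ from funext (hFa i), pdxi_sum_base_mul hπ i k ha]
  rw [← hsecond, ← hsecond, pdxi_pdxi_comm k i hF.contDiffAt]

end FibreDerivative

/-- The bracket `{F,G}_Ω = π^{ij} a_i b_j` on the space `H_Ω` of fibrewise Hamiltonian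
functions is well-defined (independent of the choice of the Hamiltonian potentials),
satisfies `{F,G}_Ω = a_i ∂G/∂ξ_i = −b_i ∂F/∂ξ_i`, and `H_Ω` is closed under it. -/
theorem hamiltonian_bracket_well_defined_and_closed
    (n : ℕ) (π : Fin n → Fin n → (Fin n → ℝ) → ℝ)
    (hπ : ∀ i j, ContDiff ℝ (⊤ : ℕ∞) (π i j))
    (hanti : ∀ i j (x : Fin n → ℝ), π i j x = -π j i x)
    (F G : (Fin n → ℝ) × (Fin n → ℝ) → ℝ)
    (a b a' b' : Fin n → (Fin n → ℝ) × (Fin n → ℝ) → ℝ)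
    (hF : ContDiff ℝ (⊤ : ℕ∞) F) (hG : ContDiff ℝ (⊤ : ℕ∞) G)
    (ha : ∀ i, ContDiff ℝ (⊤ : ℕ∞) (a i)) (hb : ∀ i, ContDiff ℝ (⊤ : ℕ∞) (b i))
    (hFa : ∀ i p, pdxi i F p = ∑ j, π i j p.1 * a j p)
    (hGb : ∀ i p, pdxi i G p = ∑ j, π i j p.1 * b j p)
    (hFa' : ∀ i p, pdxi i F p = ∑ j, π i j p.1 * a' j p)
    (hGb' : ∀ i p, pdxi i G p = ∑ j, π i j p.1 * b' j p) :
    (∀ p : (Fin n → ℝ) × (Fin n → ℝ),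
        ∑ i, ∑ j, π i j p.1 * a i p * b j p = ∑ i, ∑ j, π i j p.1 * a' i p * b' j p)
    ∧ (∀ p : (Fin n → ℝ) × (Fin n → ℝ),
        ∑ i, ∑ j, π i j p.1 * a i p * b j p = ∑ i, a i p * pdxi i G p)
    ∧ (∀ p : (Fin n → ℝ) × (Fin n → ℝ),
        ∑ i, ∑ j, π i j p.1 * a i p * b j p = -∑ i, b i p * pdxi i F p)
    ∧ (∃ c : Fin n → (Fin n → ℝ) × (Fin n → ℝ) → ℝ,
        ∀ k (p : (Fin n → ℝ) × (Fin n → ℝ)),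
          pdxi k (fun q => ∑ i, ∑ j, π i j q.1 * a i q * b j q) p
            = ∑ j, π k j p.1 * c j p) := by
  have hπ' (i j : Fin n) : Differentiable ℝ (π i j) := (hπ i j).differentiable (by simp)
  have ha' (i : Fin n) : Differentiable ℝ (a i) := (ha i).differentiable (by simp)
  have hb' (i : Fin n) : Differentiable ℝ (b i) := (hb i).differentiable (by simp)
  refine ⟨fun p => pairing_congr (hanti · · p.1) (fun i => ?_) (fun i => ?_),
    fun p => pairing_eq_sum_mul_right fun i => hGb i p,
    fun p => pairing_eq_neg_sum_mul_left (hanti · · p.1) fun j => hFa j p,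
    ⟨fun j q => ∑ i, (a i q * pdxi i (b j) q - b i q * pdxi i (a j) q), fun k p => ?_⟩⟩
  · rw [← hFa, ← hFa']
  · rw [← hGb, ← hGb']
  · exact (pdxi_pairing hπ' k ha' hb' p).trans <| pairing_add_pairing_eq_sum_mul
      (hanti · · p.1) _ _ (sum_mul_pdxi_comm hπ' (hF.of_le (by norm_cast)) ha' hFa p)
      (sum_mul_pdxi_comm hπ' (hG.of_le (by norm_cast)) hb' hGb p) k
end

section
/- Suppose D and †D are associated invertible nonlinear contravariant connections, written locally with matrices A^i_s and K^i_s having formal inverses B^i_j and L^i_j. Then π^{is} B^j_s = π^{js} L^i_s, and any solution F of the system D^{dx^i} F = 0 satisfies ∂F/∂ξ_i = −π^{ij} L^s_j ∂F/∂x^s; in particular F ∈ H_Ω. -/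
/-- For associated invertible nonlinear contravariant connections `(D, †D)` with
matrices `A`, `K` and inverses `B`, `L`: `π^{is} B^j_s = π^{js} L^i_s`, and any
solution `F` of `D F = 0` satisfies `∂F/∂ξ_i = −π^{ij} L^s_j ∂F/∂x^s`; in particular
`F ∈ H_Ω`. -/
theorem kernel_of_associated_connections_in_hamiltonian_space
    (n : ℕ) (π : Fin n → Fin n → (Fin n → ℝ) → ℝ)
    (A K B L : Fin n → Fin n → (Fin n → ℝ) × (Fin n → ℝ) → ℝ)
    (hπ : ∀ i j, ContDiff ℝ (⊤ : ℕ∞) (π i j))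
    (hanti : ∀ i j (x : Fin n → ℝ), π i j x = -π j i x)
    (hA : ∀ i s, ContDiff ℝ (⊤ : ℕ∞) (A i s))
    (hK : ∀ i s, ContDiff ℝ (⊤ : ℕ∞) (K i s))
    (hassoc : ∀ i j (p : (Fin n → ℝ) × (Fin n → ℝ)),
      ∑ s, π i s p.1 * A j s p = ∑ s, π j s p.1 * K i s p)
    (hAB : ∀ i j p, ∑ s, A i s p * B s j p = if i = j then (1:ℝ) else 0)
    (hBA : ∀ i j p, ∑ s, B i s p * A s j p = if i = j then (1:ℝ) else 0)
    (hKL : ∀ i j p, ∑ s, K i s p * L s j p = if i = j then (1:ℝ) else 0)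
    (hLK : ∀ i j p, ∑ s, L i s p * K s j p = if i = j then (1:ℝ) else 0) :
    (∀ i j (p : (Fin n → ℝ) × (Fin n → ℝ)),
        ∑ s, π i s p.1 * B j s p = ∑ s, π j s p.1 * L i s p)
    ∧ (∀ F : (Fin n → ℝ) × (Fin n → ℝ) → ℝ, ContDiff ℝ (⊤ : ℕ∞) F →
        (∀ i p, Dop π A i F p = 0) →
        (∀ i (p : (Fin n → ℝ) × (Fin n → ℝ)),
            pdxi i F p = -∑ j, π i j p.1 * ∑ s, L s j p * pdx s F p)
          ∧ ∃ a : Fin n → (Fin n → ℝ) × (Fin n → ℝ) → ℝ,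
              ∀ i (p : (Fin n → ℝ) × (Fin n → ℝ)),
                pdxi i F p = ∑ j, π i j p.1 * a j p) := by
  have swapstep : ∀ (f g : Fin n → Fin n → ℝ),
      (∀ a b, f a b = g b a) → ∑ s, ∑ a, f s a = ∑ a, ∑ s, g a s := by
    intro f g h
    rw [Finset.sum_comm]
    exact Finset.sum_congr rfl fun a _ => Finset.sum_congr rfl fun b _ => h b a
  have key : ∀ i j (p : (Fin n → ℝ) × (Fin n → ℝ)),
      ∑ s, π i s p.1 * B j s p = ∑ s, π j s p.1 * L i s p := by
    intro i j p
    have step1 : ∀ b, ∑ s, (∑ a, L i a p * π a s p.1) * A b s p = π b i p.1 := by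
      intro b
      calc ∑ s, (∑ a, L i a p * π a s p.1) * A b s p
          = ∑ a, L i a p * ∑ s, π a s p.1 * A b s p := by
            simp only [Finset.sum_mul, Finset.mul_sum]
            exact swapstep _ _ (fun a b => by ring)
        _ = ∑ a, L i a p * ∑ s, π b s p.1 * K a s p := by
            simp only [hassoc]
        _ = ∑ s, π b s p.1 * ∑ a, L i a p * K a s p := by
            simp only [Finset.mul_sum]
            exact swapstep _ _ (fun a b => by ring)
        _ = π b i p.1 := by
            simp only [hLK]
            simp [Finset.sum_ite_eq]
    have step2 : ∑ b, B j b p * π b i p.1 = ∑ a, L i a p * π a j p.1 := by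
      calc ∑ b, B j b p * π b i p.1
          = ∑ b, B j b p * ∑ s, (∑ a, L i a p * π a s p.1) * A b s p := by
            simp only [step1]
        _ = ∑ s, (∑ a, L i a p * π a s p.1) * ∑ b, B j b p * A b s p := by
            simp only [Finset.mul_sum, Finset.sum_mul]
            exact swapstep _ _ (fun a b =>
              Finset.sum_congr rfl fun x _ => by ring)
        _ = ∑ a, L i a p * π a j p.1 := by
            simp only [hBA]
            simp [Finset.sum_ite_eq]
    calc ∑ s, π i s p.1 * B j s p
        = -∑ b, B j b p * π b i p.1 := by
          rw [← Finset.sum_neg_distrib]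
          refine Finset.sum_congr rfl fun s _ => ?_
          rw [hanti i s p.1]; ring
      _ = -∑ a, L i a p * π a j p.1 := by rw [step2]
      _ = ∑ s, π j s p.1 * L i s p := by
          rw [← Finset.sum_neg_distrib]
          refine Finset.sum_congr rfl fun s _ => ?_
          rw [hanti s j p.1]; ring
  refine ⟨key, ?_⟩
  intro F hF hDF
  have main : ∀ i (p : (Fin n → ℝ) × (Fin n → ℝ)),
      pdxi i F p = -∑ j, π i j p.1 * ∑ s, L s j p * pdx s F p := by
    intro t p
    have hEq : ∀ b, ∑ s, A b s p * pdxi s F p = ∑ s, π b s p.1 * pdx s F p := by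
      intro b
      have := hDF b p
      unfold Dop at this
      linarith [this]
    calc pdxi t F p
        = ∑ s, (∑ b, B t b p * A b s p) * pdxi s F p := by
          simp only [hBA]
          simp [Finset.sum_ite_eq]
      _ = ∑ b, B t b p * ∑ s, A b s p * pdxi s F p := by
          simp only [Finset.sum_mul, Finset.mul_sum]
          exact swapstep _ _ (fun a b => by ring)
      _ = ∑ b, B t b p * ∑ s, π b s p.1 * pdx s F p := by simp only [hEq]
      _ = ∑ s, (∑ b, π b s p.1 * B t b p) * pdx s F p := by
          simp only [Finset.sum_mul, Finset.mul_sum]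
          exact swapstep _ _ (fun a b => by ring)
      _ = ∑ s, (-∑ b, π s b p.1 * B t b p) * pdx s F p := by
          refine Finset.sum_congr rfl fun s _ => ?_
          congr 1
          rw [← Finset.sum_neg_distrib]
          refine Finset.sum_congr rfl fun b _ => ?_
          rw [hanti s b p.1]; ring
      _ = -∑ s, (∑ b, π t b p.1 * L s b p) * pdx s F p := by
          rw [← Finset.sum_neg_distrib]
          refine Finset.sum_congr rfl fun s _ => ?_
          rw [key s t p]; ring
      _ = -∑ j, π t j p.1 * ∑ s, L s j p * pdx s F p := by
          congr 1
          simp only [Finset.sum_mul, Finset.mul_sum]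
          exact swapstep _ _ (fun a b => by ring)
  refine ⟨main, fun j p => -∑ s, L s j p * pdx s F p, ?_⟩
  intro i p
  rw [main i p, ← Finset.sum_neg_distrib]
  refine Finset.sum_congr rfl fun j _ => by ring
end
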